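/- arXiv:1311.1812 — 7 statements merged into one kernel-verified Lean document; each statement's English description precedes it below -/
import Mathlib

section
/- Let g : ℝ → ℝ be continuous with g(r) > 0 for all r, and let n ≥ 1 be a natural number. If x : [s, T) → ℝ is differentiable, x(s) < 0, and ẋ(t) ≤ −g(t) x(t)^{2n} for all t, then for all t in [s, T), x(t)^{−(2n−1)} ≥ x(s)^{−(2n−1)} + (2n−1)∫_s^t g(r) dr, hence x(t) ≤ (x(s)^{−(2n−1)} + (2n−1)∫_s^t g(r) dr)^{−1/(2n−1)} whenever the bracketed quantity is negative. -/
/-!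
For odd `k` the substitution `y = x ^ (-k)` linearises the Bernoulli-type inequality
`ẋ ≤ -g x ^ (k + 1)`: since `x ^ (k + 1) ≥ 0`, `x` is antitone and so stays negative, and then
`ẏ = -k x ^ (-k - 1) ẋ ≥ k g`. Integrating gives the lower bound on `y`, and taking the
(decreasing, odd) `k`-th root of `y` turns it into the upper bound on `x`.
-/

open Set intervalIntegral

section BernoulliInequality

variable {g x x' : ℝ → ℝ} {k : ℕ} {s T : ℝ}

theorem antitoneOn_of_deriv_le_neg_mul_pow (hk : Odd k) (hg : ∀ t ∈ Ico s T, 0 ≤ g t)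
    (hx : ∀ t ∈ Ico s T, HasDerivAt x (x' t) t)
    (hineq : ∀ t ∈ Ico s T, x' t ≤ -g t * x t ^ (k + 1)) :
    AntitoneOn x (Ico s T) := by
  refine antitoneOn_of_hasDerivWithinAt_nonpos (convex_Ico s T)
    (fun t ht ↦ (hx t ht).continuousAt.continuousWithinAt) (f' := x') ?_ ?_
  all_goals rw [interior_Ico]; intro t ht
  · exact (hx t (Ioo_subset_Ico_self ht)).hasDerivWithinAt
  · have := hineq t (Ioo_subset_Ico_self ht)
    nlinarith [hg t (Ioo_subset_Ico_self ht), hk.add_one.pow_nonneg (x t)]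

theorem neg_of_deriv_le_neg_mul_pow (hk : Odd k) (hg : ∀ t ∈ Ico s T, 0 ≤ g t)
    (hx : ∀ t ∈ Ico s T, HasDerivAt x (x' t) t)
    (hineq : ∀ t ∈ Ico s T, x' t ≤ -g t * x t ^ (k + 1)) (hxs : x s < 0) :
    ∀ t ∈ Ico s T, x t < 0 := fun _ ht ↦
  (antitoneOn_of_deriv_le_neg_mul_pow hk hg hx hineq ⟨le_rfl, ht.1.trans_lt ht.2⟩ ht ht.1).trans_lt
    hxs

theorem mul_le_neg_mul_zpow_mul {a a' c : ℝ} (hk : Odd k) (ha : a ≠ 0)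
    (h : a' ≤ -c * a ^ (k + 1)) :
    k * c ≤ ((-k : ℤ) : ℝ) * a ^ ((-k : ℤ) - 1) * a' := by
  have hpow : a ^ ((-k : ℤ) - 1) = (a ^ (k + 1))⁻¹ := by
    rw [show (-k : ℤ) - 1 = -((k + 1 : ℕ) : ℤ) by push_cast; ring, zpow_neg, zpow_natCast]
  have hpos : 0 < a ^ (k + 1) := hk.add_one.pow_pos ha
  calc (k : ℝ) * c = -k * (a ^ (k + 1))⁻¹ * (-c * a ^ (k + 1)) := by field_simp
    _ ≤ -k * (a ^ (k + 1))⁻¹ * a' :=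
      mul_le_mul_of_nonpos_left h (mul_nonpos_of_nonpos_of_nonneg (by simp) (by positivity))
    _ = ((-k : ℤ) : ℝ) * a ^ ((-k : ℤ) - 1) * a' := by rw [hpow]; push_cast; ring

theorem mul_integral_le_zpow_sub_zpow (hk : Odd k) (hg : Continuous g)
    (hgnn : ∀ t ∈ Ico s T, 0 ≤ g t) (hx : ∀ t ∈ Ico s T, HasDerivAt x (x' t) t)
    (hineq : ∀ t ∈ Ico s T, x' t ≤ -g t * x t ^ (k + 1)) (hxs : x s < 0) :
    ∀ t ∈ Ico s T, k * ∫ r in s..t, g r ≤ x t ^ (-k : ℤ) - x s ^ (-k : ℤ) := by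
  intro t ht
  have hIcc : Icc s t ⊆ Ico s T := Icc_subset_Ico_right ht.2
  have hne : ∀ u ∈ Icc s t, x u ≠ 0 := fun u hu ↦
    (neg_of_deriv_le_neg_mul_pow hk hgnn hx hineq hxs u (hIcc hu)).ne
  have hderiv : ∀ u ∈ Icc s t,
      HasDerivAt (fun v ↦ x v ^ (-k : ℤ)) (((-k : ℤ) : ℝ) * x u ^ ((-k : ℤ) - 1) * x' u) u :=
    fun u hu ↦ (hasDerivAt_zpow _ _ (Or.inl (hne u hu))).comp u (hx u (hIcc hu))
  rw [← integral_const_mul]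
  refine integral_le_sub_of_hasDeriv_right_of_le ht.1
    (fun u hu ↦ (hderiv u hu).continuousAt.continuousWithinAt)
    (fun u hu ↦ (hderiv u (Ioo_subset_Icc_self hu)).hasDerivWithinAt)
    (continuous_const.mul hg).integrableOn_Icc fun u hu ↦ ?_
  have hu' := Ioo_subset_Icc_self hu
  exact mul_le_neg_mul_zpow_mul hk (hne u hu') (hineq u (hIcc hu'))

end BernoulliInequality

theorem le_neg_rpow_of_le_zpow {k : ℕ} {a A : ℝ} (hk : Odd k) (ha : a < 0)
    (h : A ≤ a ^ (-k : ℤ)) : a ≤ -(-A) ^ (-(1 : ℝ) / k) := by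
  have hb : 0 < -a := neg_pos.mpr ha
  have hk0 : (k : ℝ) ≠ 0 := by exact_mod_cast hk.pos.ne'
  have hodd : Odd (-k : ℤ) := (hk.natCast (R := ℤ)).neg
  have hle : (-a) ^ (-k : ℤ) ≤ -A := by
    rw [hodd.neg_zpow]; linarith
  have hroot : ((-a) ^ (-k : ℤ)) ^ (-(1 : ℝ) / k) = -a := by
    rw [← Real.rpow_intCast, ← Real.rpow_mul hb.le,
      show ((-k : ℤ) : ℝ) * (-1 / k) = 1 by push_cast; field_simp, Real.rpow_one]
  have := Real.rpow_le_rpow_of_nonpos (z := -(1 : ℝ) / k) (zpow_pos hb _) hle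
    (div_nonpos_of_nonpos_of_nonneg (by norm_num) k.cast_nonneg)
  linarith

theorem stmt2 (g : ℝ → ℝ) (hg : Continuous g) (hgpos : ∀ r, 0 < g r)
    (n : ℕ) (hn : 1 ≤ n) (s T : ℝ) (x : ℝ → ℝ)
    (hx : ∀ t ∈ Set.Ico s T, HasDerivAt x (deriv x t) t)
    (hxs : x s < 0)
    (hineq : ∀ t ∈ Set.Ico s T, deriv x t ≤ -g t * x t ^ (2 * n)) :
    ∀ t ∈ Set.Ico s T,
      x s ^ (-(2 * (n : ℤ) - 1)) + (2 * (n : ℝ) - 1) * ∫ r in s..t, g r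
        ≤ x t ^ (-(2 * (n : ℤ) - 1)) ∧
      (x s ^ (-(2 * (n : ℤ) - 1)) + (2 * (n : ℝ) - 1) * ∫ r in s..t, g r < 0 →
        x t ≤ -(-(x s ^ (-(2 * (n : ℤ) - 1)) + (2 * (n : ℝ) - 1) * ∫ r in s..t, g r))
          ^ (-(1 : ℝ) / (2 * n - 1))) := by
  obtain ⟨m, rfl⟩ := Nat.exists_eq_add_of_le' hn
  have hk : Odd (2 * m + 1) := odd_two_mul_add_one m
  have hexp : -(2 * ((m + 1 : ℕ) : ℤ) - 1) = -((2 * m + 1 : ℕ) : ℤ) := by push_cast; ring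
  have hcoef : 2 * ((m + 1 : ℕ) : ℝ) - 1 = ((2 * m + 1 : ℕ) : ℝ) := by push_cast; ring
  rw [hexp, hcoef, show 2 * (m + 1) = 2 * m + 1 + 1 by ring] at *
  have hgnn : ∀ t ∈ Ico s T, 0 ≤ g t := fun t _ ↦ (hgpos t).le
  intro t ht
  have hbound := mul_integral_le_zpow_sub_zpow hk hg hgnn hx hineq hxs t ht
  refine ⟨by linarith, fun _ ↦ le_neg_rpow_of_le_zpow hk
    (neg_of_deriv_le_neg_mul_pow hk hgnn hx hineq hxs t ht) (by linarith)⟩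
end

section
/- Let g : ℝ → ℝ be continuous with ∫_s^t g(r) dr → +∞ as s → −∞ for every fixed t, and let n ≥ 1. For every fixed t and every x₀ ≥ 0, the solution x(t; s, x₀) of ẋ = −g(t) x^{2n} starting at time s satisfies x(t; s, x₀) → 0 as s → −∞, provided x₀^{−(2n−1)} + (2n−1)∫_s^τ g(r) dr > 0 for all τ ∈ [s, t]; i.e., the zero solution is pullback attracting for nonnegative initial data. -/
open Filter intervalIntegral

theorem stmt4 (g : ℝ → ℝ) (hg : Continuous g)
    (hgdiv : ∀ t : ℝ, Tendsto (fun s => ∫ r in s..t, g r) atBot atTop)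
    (n : ℕ) (hn : 1 ≤ n) (t x₀ : ℝ) (hx₀ : 0 ≤ x₀)
    (hpos : ∀ s ≤ t, ∀ τ ∈ Set.Icc s t,
      0 < x₀ ^ (-(2 * (n : ℤ) - 1)) + (2 * (n : ℝ) - 1) * ∫ r in s..τ, g r) :
    Tendsto
      (fun s => (x₀ ^ (-(2 * (n : ℤ) - 1)) + (2 * (n : ℝ) - 1) * ∫ r in s..t, g r)
        ^ (-(1 : ℝ) / (2 * n - 1)))
      atBot (nhds 0) := by
  have hn' : (0:ℝ) < 2 * n - 1 := by
    have : (1:ℝ) ≤ n := by exact_mod_cast hn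
    linarith
  have h1 : Tendsto (fun s => x₀ ^ (-(2 * (n : ℤ) - 1)) + (2 * (n : ℝ) - 1) * ∫ r in s..t, g r)
      atBot atTop := tendsto_atTop_add_const_left _ _ ((hgdiv t).const_mul_atTop hn')
  have h2 : Tendsto (fun y : ℝ => y ^ (-(1:ℝ) / (2 * n - 1))) atTop (nhds 0) := by
    have := tendsto_rpow_neg_atTop (y := 1 / (2 * (n:ℝ) - 1)) (by positivity)
    simpa [neg_div] using this
  exact h2.comp h1
end

section
/- Let g : ℝ → ℝ be continuous and suppose there is T* such that ∫_s^t g(r) dr > 0 for all s ≤ T* (t fixed). Let n ≥ 1 and x₀ < 0. Then there exists s*(t) > −∞ such that the quantity x₀^{−(2n−1)} + (2n−1)∫_s^t g(r) dr tends to 0 from below as s decreases to s*(t) along solutions; consequently, the bound (x₀^{−(2n−1)} + (2n−1)∫_s^t g(r) dr)^{−1/(2n−1)} tends to −∞ as s → s*(t)⁺, i.e., the solution of ẋ ≤ −g(t)x^{2n} at fixed final time t blows down to −∞ in finite backward initial time. -/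
open Filter intervalIntegral

theorem stmt6 (g : ℝ → ℝ) (hg : Continuous g) (t Tstar : ℝ)
    (hpos : ∀ s ≤ Tstar, 0 < ∫ r in s..t, g r)
    (hdiv : Tendsto (fun s => ∫ r in s..t, g r) atBot atTop)
    (n : ℕ) (hn : 1 ≤ n) (x₀ : ℝ) (hx₀ : x₀ < 0) :
    ∃ sstar : ℝ,
      Tendsto (fun s => x₀ ^ (-(2 * (n : ℤ) - 1)) + (2 * (n : ℝ) - 1) * ∫ r in s..t, g r)
        (nhdsWithin sstar (Set.Ioi sstar)) (nhdsWithin 0 (Set.Iio 0)) ∧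
      Tendsto
        (fun s =>
          -(-(x₀ ^ (-(2 * (n : ℤ) - 1)) + (2 * (n : ℝ) - 1) * ∫ r in s..t, g r))
            ^ (-(1 : ℝ) / (2 * n - 1)))
        (nhdsWithin sstar (Set.Ioi sstar)) atBot := by
  set F : ℝ → ℝ := fun s => ∫ r in s..t, g r with hFdef
  have hFc : Continuous F := by
    have h1 : Continuous fun s => ∫ r in t..s, g r :=
      intervalIntegral.continuous_primitive
        (fun a b => (hg.intervalIntegrable a b)) t
    have : F = fun s => -∫ r in t..s, g r := by
      funext s; simp [hFdef, intervalIntegral.integral_symm t s]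
    rw [this]; exact h1.neg
  have hb : (0:ℝ) < 2 * (n : ℝ) - 1 := by
    have : (1:ℝ) ≤ (n:ℝ) := by exact_mod_cast hn
    linarith
  set b : ℝ := 2 * (n : ℝ) - 1 with hbdef
  have hc : x₀ ^ (-(2 * (n : ℤ) - 1)) < 0 := by
    have hodd : Odd (2 * n - 1) := by
      refine ⟨n - 1, ?_⟩; omega
    have hpow : x₀ ^ (2 * n - 1) < 0 := hodd.pow_neg hx₀
    have : x₀ ^ (-(2 * (n : ℤ) - 1)) = (x₀ ^ (2 * n - 1))⁻¹ := by
      rw [zpow_neg]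
      congr 1
      rw [← zpow_natCast]
      congr 1
      omega
    rw [this]
    exact inv_lt_zero.mpr hpow
  set c : ℝ := x₀ ^ (-(2 * (n : ℤ) - 1)) with hcdef
  set a : ℝ := -c / b with hadef
  have ha : 0 < a := div_pos (by linarith) hb
  -- the set S
  set S : Set ℝ := Set.Iic t ∩ F ⁻¹' Set.Ici a with hSdef
  have hSclosed : IsClosed S := isClosed_Iic.inter (isClosed_Ici.preimage hFc)
  have hSne : S.Nonempty := by
    have h1 : ∀ᶠ s in atBot, a ≤ F s := hdiv.eventually (eventually_ge_atTop a)
    have h2 : ∀ᶠ s in atBot, s ≤ t := eventually_le_atBot t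
    obtain ⟨s, hs1, hs2⟩ := (h1.and h2).exists
    exact ⟨s, hs2, hs1⟩
  have hSbdd : BddAbove S := ⟨t, fun s hs => hs.1⟩
  set sstar : ℝ := sSup S with hsdef
  have hmem : sstar ∈ S := hSclosed.csSup_mem hSne hSbdd
  have hFt : F t = 0 := by simp [hFdef]
  have hstar_lt : sstar < t := by
    have h1 : sstar ≤ t := hmem.1
    rcases lt_or_eq_of_le h1 with h | h
    · exact h
    · exfalso
      have h2 : a ≤ F sstar := hmem.2
      rw [h, hFt] at h2
      linarith
  have hlt : ∀ s ∈ Set.Ioo sstar t, F s < a := by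
    intro s hs
    by_contra h
    push_neg at h
    have : s ∈ S := ⟨hs.2.le, h⟩
    exact absurd (le_csSup hSbdd this) (not_le.mpr hs.1)
  have hIoo : Set.Ioo sstar t ∈ nhdsWithin sstar (Set.Ioi sstar) := by
    rw [← Set.Ioi_inter_Iio]
    exact Filter.inter_mem self_mem_nhdsWithin
      (nhdsWithin_le_nhds (Iio_mem_nhds hstar_lt))
  -- F sstar = a
  have hFs : F sstar = a := by
    refine le_antisymm ?_ hmem.2
    haveI : (nhdsWithin sstar (Set.Ioi sstar)).NeBot := nhdsGT_neBot sstar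
    refine le_of_tendsto ((hFc.tendsto sstar).mono_left (nhdsWithin_le_nhds (s := Set.Ioi sstar))) ?_
    filter_upwards [hIoo] with s hs using (hlt s hs).le
  set G : ℝ → ℝ := fun s => c + b * F s with hGdef
  have hG0 : G sstar = 0 := by
    simp only [hGdef, hFs, hadef]
    field_simp
    ring
  have hGneg : ∀ᶠ s in nhdsWithin sstar (Set.Ioi sstar), G s < 0 := by
    filter_upwards [hIoo] with s hs
    have := hlt s hs
    have : b * F s < b * a := by exact (mul_lt_mul_iff_right₀ hb).mpr this
    simp only [hGdef, hadef] at *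
    nlinarith
  have hGtendsto : Tendsto G (nhdsWithin sstar (Set.Ioi sstar)) (nhdsWithin 0 (Set.Iio 0)) := by
    refine tendsto_nhdsWithin_of_tendsto_nhds_of_eventually_within _ ?_ hGneg
    have hGc : Continuous G := continuous_const.add (continuous_const.mul hFc)
    have := hGc.tendsto sstar
    rw [hG0] at this
    exact this.mono_left nhdsWithin_le_nhds
  refine ⟨sstar, hGtendsto, ?_⟩
  -- second part
  have hnegG : Tendsto (fun s => -G s) (nhdsWithin sstar (Set.Ioi sstar))
      (nhdsWithin 0 (Set.Ioi 0)) := by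
    refine tendsto_nhdsWithin_of_tendsto_nhds_of_eventually_within _ ?_ ?_
    · exact (hGtendsto.mono_right nhdsWithin_le_nhds).neg.mono_right (by simp)
    · filter_upwards [hGneg] with s hs using by simpa using hs
  have hp : (0:ℝ) < 1 / b := by positivity
  have hrpow : Tendsto (fun y : ℝ => y ^ (-(1:ℝ) / b)) (nhdsWithin 0 (Set.Ioi 0)) atTop := by
    have h1 : Tendsto (fun y : ℝ => (y⁻¹) ^ ((1:ℝ) / b)) (nhdsWithin 0 (Set.Ioi 0)) atTop :=
      (tendsto_rpow_atTop hp).comp tendsto_inv_nhdsGT_zero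
    refine h1.congr' ?_
    filter_upwards [self_mem_nhdsWithin] with y (hy : 0 < y)
    show (y⁻¹) ^ ((1:ℝ)/b) = y ^ (-(1:ℝ)/b)
    rw [Real.inv_rpow hy.le, ← Real.rpow_neg hy.le, neg_div]
  have hcomp : Tendsto (fun s => (-G s) ^ (-(1:ℝ) / b))
      (nhdsWithin sstar (Set.Ioi sstar)) atTop := hrpow.comp hnegG
  exact tendsto_neg_atTop_atBot.comp hcomp
end

section
/- Let g : ℝ → ℝ be continuous with g ≥ r > 0 on [T⁺, ∞), let c > 0, and suppose x₁, x₂ are solutions of ẋ = μ^{2m−1} f(t) − g(t) x^{2n} with x₁(t), x₂(t) ≥ c for all t ≥ T⁺. Then z = x₁ − x₂ satisfies ż = −a(t) z with a(t) ≥ 2 r n c^{2n−1} > 0 for t ≥ T⁺, hence |x₁(t) − x₂(t)| ≤ |x₁(T⁺) − x₂(T⁺)| e^{−2 r n c^{2n−1}(t − T⁺)} → 0 as t → +∞. -/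
/-!
Subtracting the two equations cancels the forcing term, and since
`x₁^{2n} - x₂^{2n} = (x₁ - x₂) ∑_{i<2n} x₁^i x₂^{2n-1-i}`, the difference `z = x₁ - x₂` solves the
linear equation `ż = -a(t) z` with `a = g · ∑_{i<2n} x₁^i x₂^{2n-1-i} ≥ r · 2n c^{2n-1}`.
Whenever `a ≥ K`, the quantity `z² e^{2K(t - T)}` is nonincreasing, which is the exponential bound.
-/

open Filter Finset Topology

theorem card_mul_pow_le_geom_sum₂ {R : Type*} [CommSemiring R] [PartialOrder R] [IsOrderedRing R]
    {c x y : R} (hc : 0 ≤ c) (hx : c ≤ x) (hy : c ≤ y) (k : ℕ) :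
    (k : R) * c ^ (k - 1) ≤ ∑ i ∈ range k, x ^ i * y ^ (k - 1 - i) := by
  have hterm : ∀ i ∈ range k, c ^ (k - 1) ≤ x ^ i * y ^ (k - 1 - i) := by
    intro i hi
    have hsplit : c ^ (k - 1) = c ^ i * c ^ (k - 1 - i) := by
      rw [← pow_add]
      have := mem_range.mp hi
      congr 1
      omega
    rw [hsplit]
    exact mul_le_mul (pow_le_pow_left₀ hc hx i) (pow_le_pow_left₀ hc hy _) (pow_nonneg hc _)
      (pow_nonneg (hc.trans hx) _)
  simpa [nsmul_eq_mul] using card_nsmul_le_sum _ _ _ hterm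

theorem hasDerivAt_sub_of_hasDerivAt_sub_mul_pow {x₁ x₂ : ℝ → ℝ} {F G t : ℝ} {k : ℕ}
    (h₁ : HasDerivAt x₁ (F - G * x₁ t ^ k) t) (h₂ : HasDerivAt x₂ (F - G * x₂ t ^ k) t) :
    HasDerivAt (fun τ => x₁ τ - x₂ τ)
      (-(G * ∑ i ∈ range k, x₁ t ^ i * x₂ t ^ (k - 1 - i)) * (x₁ t - x₂ t)) t :=
  (h₁.sub h₂).congr_deriv (by linear_combination G * geom_sum₂_mul (x₁ t) (x₂ t) k)

section LinearDecay

variable {z a : ℝ → ℝ} {T K : ℝ}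

theorem antitoneOn_sq_mul_exp_of_hasDerivAt_neg_mul
    (hz : ∀ t, T ≤ t → HasDerivAt z (-(a t) * z t) t) (ha : ∀ t, T ≤ t → K ≤ a t) :
    AntitoneOn (fun t => z t ^ 2 * Real.exp (2 * K * (t - T))) (Set.Ici T) := by
  have hw : ∀ t, T ≤ t → HasDerivAt (fun t => z t ^ 2 * Real.exp (2 * K * (t - T)))
      (2 * z t ^ 2 * Real.exp (2 * K * (t - T)) * (K - a t)) t := by
    intro t ht
    have he : HasDerivAt (fun t => Real.exp (2 * K * (t - T)))
        (Real.exp (2 * K * (t - T)) * (2 * K)) t := by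
      simpa using (((hasDerivAt_id t).sub_const T).const_mul (2 * K)).exp
    refine (((hz t ht).pow 2).mul he).congr_deriv ?_
    push_cast [Pi.pow_apply]
    ring
  refine antitoneOn_of_hasDerivWithinAt_nonpos (convex_Ici T)
    (fun t ht => (hw t ht).continuousAt.continuousWithinAt)
    (fun t ht => (hw t (interior_subset ht)).hasDerivWithinAt) fun t ht => ?_
  have hKa : K - a t ≤ 0 := sub_nonpos.mpr (ha t (interior_subset ht))
  exact mul_nonpos_of_nonneg_of_nonpos (by positivity) hKa

theorem abs_le_mul_exp_of_hasDerivAt_neg_mul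
    (hz : ∀ t, T ≤ t → HasDerivAt z (-(a t) * z t) t) (ha : ∀ t, T ≤ t → K ≤ a t)
    {t : ℝ} (ht : T ≤ t) :
    |z t| ≤ |z T| * Real.exp (-K * (t - T)) := by
  have hw := antitoneOn_sq_mul_exp_of_hasDerivAt_neg_mul hz ha Set.self_mem_Ici ht ht
  simp only [sub_self, mul_zero, Real.exp_zero, mul_one] at hw
  have hexp : Real.exp (-K * (t - T)) ^ 2 * Real.exp (2 * K * (t - T)) = 1 := by
    rw [sq, ← Real.exp_add, ← Real.exp_add, ← Real.exp_zero]
    ring_nf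
  rw [← sq_le_sq₀ (abs_nonneg _) (by positivity), mul_pow, sq_abs, sq_abs]
  calc z t ^ 2 = z t ^ 2 * Real.exp (2 * K * (t - T)) * Real.exp (-K * (t - T)) ^ 2 := by
        rw [mul_assoc, mul_comm (Real.exp _), hexp, mul_one]
    _ ≤ z T ^ 2 * Real.exp (-K * (t - T)) ^ 2 := by gcongr

end LinearDecay

theorem tendsto_mul_exp_neg_mul_sub_atTop {K : ℝ} (hK : 0 < K) (C T : ℝ) :
    Tendsto (fun t => C * Real.exp (-K * (t - T))) atTop (𝓝 0) := by
  have hlin : Tendsto (fun t => K * (t - T)) atTop atTop :=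
    (tendsto_atTop_add_const_right _ _ tendsto_id).const_mul_atTop hK
  simpa [neg_mul] using (Real.tendsto_exp_neg_atTop_nhds_zero.comp hlin).const_mul C

theorem stmt11_general (f g : ℝ → ℝ) (Tp r c : ℝ) (hr : 0 < r) (hc : 0 < c)
    (hgb : ∀ t, Tp ≤ t → r ≤ g t)
    (m n : ℕ) (hn : 1 ≤ n) (μ : ℝ)
    (x₁ x₂ : ℝ → ℝ)
    (h₁ : ∀ t, HasDerivAt x₁ (μ ^ (2 * m - 1) * f t - g t * x₁ t ^ (2 * n)) t)
    (h₂ : ∀ t, HasDerivAt x₂ (μ ^ (2 * m - 1) * f t - g t * x₂ t ^ (2 * n)) t)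
    (hb₁ : ∀ t, Tp ≤ t → c ≤ x₁ t) (hb₂ : ∀ t, Tp ≤ t → c ≤ x₂ t) :
    (∃ a : ℝ → ℝ,
      ∀ t, Tp ≤ t →
        HasDerivAt (fun τ => x₁ τ - x₂ τ) (-(a t) * (x₁ t - x₂ t)) t ∧
        2 * r * n * c ^ (2 * n - 1) ≤ a t) ∧
    (∀ t, Tp ≤ t →
      |x₁ t - x₂ t| ≤ |x₁ Tp - x₂ Tp| * Real.exp (-(2 * r * n * c ^ (2 * n - 1)) * (t - Tp))) ∧
    Tendsto (fun t => x₁ t - x₂ t) atTop (nhds 0) := by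
  set K := 2 * r * n * c ^ (2 * n - 1)
  set a : ℝ → ℝ := fun t => g t * ∑ i ∈ range (2 * n), x₁ t ^ i * x₂ t ^ (2 * n - 1 - i)
  have hz : ∀ t, Tp ≤ t → HasDerivAt (fun τ => x₁ τ - x₂ τ) (-(a t) * (x₁ t - x₂ t)) t :=
    fun t _ => hasDerivAt_sub_of_hasDerivAt_sub_mul_pow (h₁ t) (h₂ t)
  have ha : ∀ t, Tp ≤ t → K ≤ a t := by
    intro t ht
    have hsum := card_mul_pow_le_geom_sum₂ hc.le (hb₁ t ht) (hb₂ t ht) (2 * n)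
    calc K = r * ((2 * n : ℕ) * c ^ (2 * n - 1)) := by push_cast; ring
      _ ≤ a t := mul_le_mul (hgb t ht) hsum (by positivity) (hr.le.trans (hgb t ht))
  have hK : 0 < K := by
    have : (0 : ℝ) < n := by exact_mod_cast hn
    positivity
  have hdecay := fun t (ht : Tp ≤ t) => abs_le_mul_exp_of_hasDerivAt_neg_mul hz ha ht
  refine ⟨⟨a, fun t ht => ⟨hz t ht, ha t ht⟩⟩, hdecay, ?_⟩
  refine squeeze_zero_norm' ?_ (tendsto_mul_exp_neg_mul_sub_atTop hK |x₁ Tp - x₂ Tp| Tp)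
  filter_upwards [eventually_ge_atTop Tp] with t ht using hdecay t ht

theorem stmt11 (f g : ℝ → ℝ) (hg : Continuous g) (Tp r c : ℝ) (hr : 0 < r) (hc : 0 < c)
    (hgb : ∀ t, Tp ≤ t → r ≤ g t)
    (m n : ℕ) (hm : 1 ≤ m) (hn : 1 ≤ n) (μ : ℝ)
    (x₁ x₂ : ℝ → ℝ)
    (h₁ : ∀ t, HasDerivAt x₁ (μ ^ (2 * m - 1) * f t - g t * x₁ t ^ (2 * n)) t)
    (h₂ : ∀ t, HasDerivAt x₂ (μ ^ (2 * m - 1) * f t - g t * x₂ t ^ (2 * n)) t)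
    (hb₁ : ∀ t, Tp ≤ t → c ≤ x₁ t) (hb₂ : ∀ t, Tp ≤ t → c ≤ x₂ t) :
    (∃ a : ℝ → ℝ,
      ∀ t, Tp ≤ t →
        HasDerivAt (fun τ => x₁ τ - x₂ τ) (-(a t) * (x₁ t - x₂ t)) t ∧
        2 * r * n * c ^ (2 * n - 1) ≤ a t) ∧
    (∀ t, Tp ≤ t →
      |x₁ t - x₂ t| ≤ |x₁ Tp - x₂ Tp| * Real.exp (-(2 * r * n * c ^ (2 * n - 1)) * (t - Tp))) ∧
    Tendsto (fun t => x₁ t - x₂ t) atTop (nhds 0) :=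
  stmt11_general f g Tp r c hr hc hgb m n hn μ x₁ x₂ h₁ h₂ hb₁ hb₂
end

section
/- Let f : ℝ → ℝ be continuous with antiderivative F, g : ℝ → ℝ continuous, μ real, m, n ≥ 1. Then x(t) = e^{μ^{2m−1} F(t)} / ((2n−1) ∫_{−∞}^t g(r) e^{(2n−1) μ^{2m−1} F(r)} dr)^{1/(2n−1)} is a solution of ẋ = μ^{2m−1} f(t) x − g(t) x^{2n}, provided the integral converges and is positive for all t. -/
/-! With `k = N - 1`, the substitution `u = x⁻ᵏ` turns the Bernoulli equation
`ẋ = φ̇ x - b xᴺ` into the linear equation `u̇ = -k φ̇ u + k b`, whose solution is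
`u = e^{-kφ} k ∫_{-∞}^t b e^{kφ}`; hence `x = e^φ / (k ∫_{-∞}^t b e^{kφ})^{1/k}`.
The proof checks this directly by the quotient rule, differentiating the integral over
`(-∞, τ]` by the fundamental theorem of calculus. -/

open MeasureTheory Real

theorem hasDerivAt_integral_Iic {E : Type*} [NormedAddCommGroup E] [NormedSpace ℝ E]
    [CompleteSpace E] {h : ℝ → E} (hi : ∀ τ, IntegrableOn h (Set.Iic τ)) {t : ℝ}
    (ht : ContinuousAt h t) :
    HasDerivAt (fun τ => ∫ r in Set.Iic τ, h r) (h t) t := by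
  have hsplit : (fun τ => ∫ r in Set.Iic τ, h r)
      = fun τ => (∫ r in Set.Iic t, h r) + ∫ r in t..τ, h r := by
    funext τ
    rw [← intervalIntegral.integral_Iic_sub_Iic (hi t) (hi τ), add_sub_cancel]
  have hmeas : StronglyMeasurableAtFilter h (nhds t) :=
    ⟨Set.Iic (t + 1), Iic_mem_nhds (lt_add_one t), (hi (t + 1)).aestronglyMeasurable⟩
  rw [hsplit]
  exact (intervalIntegral.integral_hasDerivAt_right
    (intervalIntegrable_iff.mpr (by simp)) hmeas ht).const_add _

theorem hasDerivAt_bernoulli_solution {φ I : ℝ → ℝ} {a b t : ℝ} {N : ℕ} (hN : N ≠ 1)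
    (hφ : HasDerivAt φ a t) (hI : HasDerivAt I (b * exp ((N - 1) * φ t)) t)
    (hpos : 0 < (N - 1) * I t) :
    HasDerivAt (fun τ => exp (φ τ) / ((N - 1) * I τ) ^ (1 / (N - 1 : ℝ)))
      (a * (exp (φ t) / ((N - 1) * I t) ^ (1 / (N - 1 : ℝ))) -
        b * (exp (φ t) / ((N - 1) * I t) ^ (1 / (N - 1 : ℝ))) ^ N) t := by
  set k : ℝ := N - 1
  have hk : k ≠ 0 := sub_ne_zero.mpr (by exact_mod_cast hN)
  have hden := (hI.const_mul k).rpow_const (p := 1 / k) (Or.inl hpos.ne')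
  have hpow : (exp (φ t) / (k * I t) ^ (1 / k)) ^ N
      = exp (φ t) * exp (k * φ t) / (k * I t * (k * I t) ^ (1 / k)) := by
    have hexp : (N : ℝ) * φ t = φ t + k * φ t := by ring
    have hrpow : 1 / k * N = 1 + 1 / k := by field_simp; ring
    rw [div_pow, ← exp_nat_mul, ← rpow_natCast, ← rpow_mul hpos.le, hexp, exp_add, hrpow,
      rpow_add hpos, rpow_one]
  refine (hφ.exp.div hden (rpow_pos_of_pos hpos _).ne').congr_deriv ?_
  rw [hpow, rpow_sub_one hpos.ne']
  field_simp

theorem stmt12_general (f g F : ℝ → ℝ) (hg : Continuous g)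
    (hF : ∀ t, HasDerivAt F (f t) t)
    (μ : ℝ) (m n : ℕ)
    (hint : ∀ t : ℝ, IntegrableOn
      (fun r => g r * Real.exp ((2 * (n : ℝ) - 1) * μ ^ (2 * m - 1) * F r)) (Set.Iic t))
    (hpos : ∀ t : ℝ,
      0 < (2 * (n : ℝ) - 1) *
        ∫ r in Set.Iic t, g r * Real.exp ((2 * (n : ℝ) - 1) * μ ^ (2 * m - 1) * F r)) :
    ∀ t : ℝ,
      HasDerivAt
        (fun τ => Real.exp (μ ^ (2 * m - 1) * F τ) /
          ((2 * (n : ℝ) - 1) *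
            ∫ r in Set.Iic τ, g r * Real.exp ((2 * (n : ℝ) - 1) * μ ^ (2 * m - 1) * F r))
            ^ ((1 : ℝ) / (2 * n - 1)))
        (μ ^ (2 * m - 1) * f t *
          (Real.exp (μ ^ (2 * m - 1) * F t) /
            ((2 * (n : ℝ) - 1) *
              ∫ r in Set.Iic t, g r * Real.exp ((2 * (n : ℝ) - 1) * μ ^ (2 * m - 1) * F r))
              ^ ((1 : ℝ) / (2 * n - 1))) -
          g t *
            (Real.exp (μ ^ (2 * m - 1) * F t) /
              ((2 * (n : ℝ) - 1) *
                ∫ r in Set.Iic t, g r * Real.exp ((2 * (n : ℝ) - 1) * μ ^ (2 * m - 1) * F r))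
                ^ ((1 : ℝ) / (2 * n - 1))) ^ (2 * n)) t := by
  intro t
  have hcast : ((2 * n : ℕ) : ℝ) - 1 = 2 * (n : ℝ) - 1 := by push_cast; rfl
  have hFc : Continuous F := continuous_iff_continuousAt.mpr fun s => (hF s).continuousAt
  have hI := hasDerivAt_integral_Iic hint
    (hg.mul (continuous_exp.comp (continuous_const.mul hFc))).continuousAt (t := t)
  have hsol := hasDerivAt_bernoulli_solution (N := 2 * n) (by omega)
    ((hF t).const_mul (μ ^ (2 * m - 1)))
    (by rw [hcast, ← mul_assoc]; exact hI) (by rw [hcast]; exact hpos t)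
  simpa only [hcast, mul_assoc] using hsol

theorem stmt12 (f g F : ℝ → ℝ) (hf : Continuous f) (hg : Continuous g)
    (hF : ∀ t, HasDerivAt F (f t) t)
    (μ : ℝ) (m n : ℕ) (hm : 1 ≤ m) (hn : 1 ≤ n)
    (hint : ∀ t : ℝ, IntegrableOn
      (fun r => g r * Real.exp ((2 * (n : ℝ) - 1) * μ ^ (2 * m - 1) * F r)) (Set.Iic t))
    (hpos : ∀ t : ℝ,
      0 < (2 * (n : ℝ) - 1) *
        ∫ r in Set.Iic t, g r * Real.exp ((2 * (n : ℝ) - 1) * μ ^ (2 * m - 1) * F r)) :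
    ∀ t : ℝ,
      HasDerivAt
        (fun τ => Real.exp (μ ^ (2 * m - 1) * F τ) /
          ((2 * (n : ℝ) - 1) *
            ∫ r in Set.Iic τ, g r * Real.exp ((2 * (n : ℝ) - 1) * μ ^ (2 * m - 1) * F r))
            ^ ((1 : ℝ) / (2 * n - 1)))
        (μ ^ (2 * m - 1) * f t *
          (Real.exp (μ ^ (2 * m - 1) * F t) /
            ((2 * (n : ℝ) - 1) *
              ∫ r in Set.Iic t, g r * Real.exp ((2 * (n : ℝ) - 1) * μ ^ (2 * m - 1) * F r))
              ^ ((1 : ℝ) / (2 * n - 1))) -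
          g t *
            (Real.exp (μ ^ (2 * m - 1) * F t) /
              ((2 * (n : ℝ) - 1) *
                ∫ r in Set.Iic t, g r * Real.exp ((2 * (n : ℝ) - 1) * μ ^ (2 * m - 1) * F r))
                ^ ((1 : ℝ) / (2 * n - 1))) ^ (2 * n)) t :=
  stmt12_general f g F hg hF μ m n hint hpos
end

section
/- Let a, g : ℝ → ℝ be continuous with g ≥ r > 0 and a(t) ≤ 0 on [T, ∞). Then every solution of u̇ = −(2n−1) a(t) u + (2n−1) g(t) with u(T) > 0 stays positive and satisfies u(t) ≥ u(T) + (2n−1) r (t − T) → +∞; consequently every positive solution x = u^{−1/(2n−1)} of ẋ = a(t) x − g(t) x^{2n} tends to 0 as t → +∞. -/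
/-!
Where `u` is positive, `-a ≥ 0` and `g ≥ r` give `u' ≥ (2n-1) r > 0`. So `u` cannot fall back
to the level `u T` (at a touching point it would be strictly increasing), hence stays positive;
integrating `u' ≥ (2n-1) r` then gives the linear lower bound, so `u → ∞` and
`u ^ (-1/(2n-1)) → 0`.
-/

open Filter Set

section DerivOnIci

variable {u u' : ℝ → ℝ} {T : ℝ}

theorem le_of_hasDerivAt_pos_of_eq (hu : ∀ t, T ≤ t → HasDerivAt u (u' t) t)
    (hpos : ∀ t, T ≤ t → u t = u T → 0 < u' t) {t : ℝ} (ht : T ≤ t) : u T ≤ u t := by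
  have key := image_le_of_deriv_right_lt_deriv_boundary' (f := fun s => -u s)
    (f' := fun s => -u' s) (B := fun _ => -u T) (B' := fun _ => 0) (a := T) (b := t)
    (fun s hs => (hu s hs.1).continuousAt.continuousWithinAt.neg)
    (fun s hs => (hu s hs.1).hasDerivWithinAt.neg) le_rfl continuousOn_const
    (fun _ _ => hasDerivWithinAt_const _ _ _)
    (fun s hs hs' => neg_lt_zero.2 (hpos s hs.1 (neg_inj.1 hs')))
    ⟨ht, le_rfl⟩
  exact neg_le_neg_iff.1 key

theorem add_mul_sub_le_of_le_hasDerivAt (hu : ∀ t, T ≤ t → HasDerivAt u (u' t) t) {k : ℝ}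
    (hk : ∀ t, T ≤ t → k ≤ u' t) {t : ℝ} (ht : T ≤ t) : u T + k * (t - T) ≤ u t := by
  have key := (convex_Ici T).mul_sub_le_image_sub_of_le_deriv
    (fun s hs => (hu s hs).continuousAt.continuousWithinAt)
    (fun s hs => (hu s (interior_subset hs)).differentiableAt.differentiableWithinAt)
    (fun s hs => (hu s (interior_subset hs)).deriv ▸ hk s (interior_subset hs))
    T self_mem_Ici t ht ht
  linarith

end DerivOnIci

theorem tendsto_atTop_of_add_mul_sub_le {u : ℝ → ℝ} {T c k : ℝ} (hk : 0 < k)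
    (hu : ∀ t, T ≤ t → c + k * (t - T) ≤ u t) : Tendsto u atTop atTop := by
  refine tendsto_atTop_mono' atTop (eventually_ge_atTop T |>.mono hu) ?_
  exact tendsto_atTop_add_const_left _ _
    ((tendsto_atTop_add_const_right atTop (-T) tendsto_id).const_mul_atTop hk)

theorem mul_le_neg_mul_mul_add_mul {c a g r u : ℝ} (hc : 0 ≤ c) (ha : a ≤ 0) (hg : r ≤ g)
    (hu : 0 ≤ u) : c * r ≤ -c * a * u + c * g := by
  nlinarith [mul_nonneg (mul_nonneg hc (neg_nonneg.2 ha)) hu, mul_le_mul_of_nonneg_left hg hc]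

theorem stmt14_general (a g : ℝ → ℝ)
    (T r : ℝ) (hr : 0 < r) (hgb : ∀ t, T ≤ t → r ≤ g t) (hab : ∀ t, T ≤ t → a t ≤ 0)
    (n : ℕ) (hn : 1 ≤ n) (u : ℝ → ℝ)
    (hu : ∀ t, T ≤ t → HasDerivAt u (-(2 * (n : ℝ) - 1) * a t * u t + (2 * (n : ℝ) - 1) * g t) t)
    (huT : 0 < u T) :
    (∀ t, T ≤ t → 0 < u t ∧ u T + (2 * (n : ℝ) - 1) * r * (t - T) ≤ u t) ∧
    Tendsto u atTop atTop ∧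
    Tendsto (fun t => u t ^ (-(1 : ℝ) / (2 * n - 1))) atTop (nhds 0) := by
  have hc : 0 < 2 * (n : ℝ) - 1 := by
    have : (1 : ℝ) ≤ n := by exact_mod_cast hn
    linarith
  have hslope : ∀ t, T ≤ t → 0 ≤ u t →
      (2 * (n : ℝ) - 1) * r ≤ -(2 * (n : ℝ) - 1) * a t * u t + (2 * (n : ℝ) - 1) * g t :=
    fun t ht => mul_le_neg_mul_mul_add_mul hc.le (hab t ht) (hgb t ht)
  have hpos : ∀ t, T ≤ t → 0 < u t := fun t ht =>
    huT.trans_le <| le_of_hasDerivAt_pos_of_eq hu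
      (fun s hs hs' => (mul_pos hc hr).trans_le (hslope s hs (hs' ▸ huT.le))) ht
  have hlin : ∀ t, T ≤ t → u T + (2 * (n : ℝ) - 1) * r * (t - T) ≤ u t := fun t ht =>
    add_mul_sub_le_of_le_hasDerivAt hu (fun s hs => hslope s hs (hpos s hs).le) ht
  have htop : Tendsto u atTop atTop := tendsto_atTop_of_add_mul_sub_le (mul_pos hc hr) hlin
  refine ⟨fun t ht => ⟨hpos t ht, hlin t ht⟩, htop, ?_⟩
  simpa only [neg_div, Function.comp_def] using (tendsto_rpow_neg_atTop (one_div_pos.2 hc)).comp htop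

theorem stmt14 (a g : ℝ → ℝ) (ha : Continuous a) (hg : Continuous g)
    (T r : ℝ) (hr : 0 < r) (hgb : ∀ t, T ≤ t → r ≤ g t) (hab : ∀ t, T ≤ t → a t ≤ 0)
    (n : ℕ) (hn : 1 ≤ n) (u : ℝ → ℝ)
    (hu : ∀ t, T ≤ t → HasDerivAt u (-(2 * (n : ℝ) - 1) * a t * u t + (2 * (n : ℝ) - 1) * g t) t)
    (huT : 0 < u T) :
    (∀ t, T ≤ t → 0 < u t ∧ u T + (2 * (n : ℝ) - 1) * r * (t - T) ≤ u t) ∧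
    Tendsto u atTop atTop ∧
    Tendsto (fun t => u t ^ (-(1 : ℝ) / (2 * n - 1))) atTop (nhds 0) :=
  stmt14_general a g T r hr hgb hab n hn u hu huT
end

section
/- Let g : ℝ → ℝ be continuous with g(t) ≥ r⁻ > 0 for all t ≤ T⁻, F an antiderivative of f with ∫_{−∞}^t f(s) ds = +∞ (i.e. F(s) → −∞ as s → −∞), n, m ≥ 1, and μ ≤ 0. If lim inf_{s→−∞} e^{μ^{2m−1}F(s)} / ((2n−1)∫_s^t g(r) e^{(2n−1)μ^{2m−1}F(r)} dr)^{1/(2n−1)} ≥ m_μ > 0 for all t, then for each fixed t the solution of ẋ = μ^{2m−1} f(t)x − g(t)x^{2n} with x(s) = x₀ ∈ (0, m_μ) satisfies x(t; s, x₀) → 0 as s → −∞. -/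
open Filter intervalIntegral

theorem stmt16 (f g F : ℝ → ℝ) (hg : Continuous g) (hf : Continuous f)
    (hF : ∀ t, HasDerivAt F (f t) t)
    (Tm rm : ℝ) (hrm : 0 < rm) (hgb : ∀ t, t ≤ Tm → rm ≤ g t)
    (hFdiv : Tendsto F atBot atBot)
    (n m : ℕ) (hn : 1 ≤ n) (hm : 1 ≤ m) (μ : ℝ) (hμ : μ ≤ 0)
    (mμ : ℝ) (hmμ : 0 < mμ)
    (hliminf : ∀ t : ℝ, mμ ≤ Filter.liminf
      (fun s => Real.exp (μ ^ (2 * m - 1) * F s) /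
        ((2 * (n : ℝ) - 1) *
          ∫ r in s..t, g r * Real.exp ((2 * (n : ℝ) - 1) * μ ^ (2 * m - 1) * F r))
          ^ ((1 : ℝ) / (2 * n - 1))) atBot) :
    ∀ t : ℝ, ∀ x₀ ∈ Set.Ioo 0 mμ,
      Tendsto
        (fun s =>
          Real.exp (μ ^ (2 * m - 1) * (F t - F s)) * x₀ /
            (1 + (2 * (n : ℝ) - 1) * x₀ ^ (2 * n - 1) *
              ∫ r in s..t,
                g r * Real.exp ((2 * (n : ℝ) - 1) * μ ^ (2 * m - 1) * (F r - F s)))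
              ^ ((1 : ℝ) / (2 * n - 1)))
        atBot (nhds 0) := by
  intro t x₀ hx₀
  obtain ⟨hx0, hxm⟩ := hx₀
  have hFc : Continuous F := by
    rw [continuous_iff_continuousAt]; exact fun x => (hF x).continuousAt
  set a : ℝ := μ ^ (2 * m - 1) with ha_def
  have hodd : Odd (2 * m - 1) := ⟨m - 1, by omega⟩
  have ha : a ≤ 0 := hodd.pow_nonpos hμ
  set b : ℝ := (2 * (n : ℝ) - 1) * a with hb_def
  have hn1 : (1 : ℝ) ≤ 2 * (n : ℝ) - 1 := by
    have : (1 : ℝ) ≤ (n : ℝ) := by exact_mod_cast hn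
    linarith
  have hb : b ≤ 0 := mul_nonpos_of_nonneg_of_nonpos (by linarith) ha
  have hexp : (0 : ℝ) < (1 : ℝ) / (2 * (n : ℝ) - 1) := by positivity
  -- T₀ such that F r ≤ 0 for r ≤ T₀
  obtain ⟨T₀, hT₀⟩ := eventually_atBot.mp (hFdiv.eventually_le_atBot 0)
  set S : ℝ := min (min t Tm) T₀ with hS_def
  have hSt : S ≤ t := (min_le_left _ _).trans (min_le_left _ _)
  have hSTm : S ≤ Tm := (min_le_left _ _).trans (min_le_right _ _)
  have hST₀ : S ≤ T₀ := min_le_right _ _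
  have hIntc : Continuous fun r => g r * Real.exp (b * F r) :=
    hg.mul (Real.continuous_exp.comp (continuous_const.mul hFc))
  have hInt : ∀ u v : ℝ, IntervalIntegrable (fun r => g r * Real.exp (b * F r))
      MeasureTheory.volume u v := fun u v => hIntc.intervalIntegrable u v
  set C : ℝ := ∫ r in S..t, g r * Real.exp (b * F r) with hC_def
  -- key lower bound for the integral
  have hkey : ∀ s, s ≤ S →
      Real.exp (-b * F s) * (rm * (S - s) + C) ≤
        ∫ r in s..t, g r * Real.exp (b * (F r - F s)) := by
    intro s hs
    have h1 : (∫ r in s..t, g r * Real.exp (b * (F r - F s))) =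
        Real.exp (-b * F s) * ∫ r in s..t, g r * Real.exp (b * F r) := by
      rw [← intervalIntegral.integral_const_mul]
      congr 1
      funext r
      rw [show b * (F r - F s) = b * F r + -b * F s by ring, Real.exp_add]
      ring
    have h2 : (∫ r in s..t, g r * Real.exp (b * F r)) =
        (∫ r in s..S, g r * Real.exp (b * F r)) + C :=
      (intervalIntegral.integral_add_adjacent_intervals (hInt s S) (hInt S t)).symm
    have h3 : rm * (S - s) ≤ ∫ r in s..S, g r * Real.exp (b * F r) := by
      have hmono : (∫ r in s..S, rm) ≤ ∫ r in s..S, g r * Real.exp (b * F r) := by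
        apply intervalIntegral.integral_mono_on hs
          (intervalIntegrable_const) (hInt s S)
        intro r hr
        have hrTm : r ≤ Tm := hr.2.trans hSTm
        have hrT₀ : r ≤ T₀ := hr.2.trans hST₀
        have hbF : 0 ≤ b * F r := by nlinarith [hb, hT₀ r hrT₀]
        have h1e : (1 : ℝ) ≤ Real.exp (b * F r) := Real.one_le_exp hbF
        have hgr : rm ≤ g r := hgb r hrTm
        calc rm = rm * 1 := (mul_one rm).symm
          _ ≤ g r * Real.exp (b * F r) :=
            mul_le_mul hgr h1e zero_le_one (le_trans hrm.le hgr)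
      rw [intervalIntegral.integral_const, smul_eq_mul] at hmono
      linarith [hmono]
    rw [h1, h2]
    exact mul_le_mul_of_nonneg_left (by linarith) (Real.exp_pos _).le
  set c : ℝ := (2 * (n : ℝ) - 1) * x₀ ^ (2 * n - 1) with hc_def
  have hc : 0 < c := mul_pos (by linarith) (pow_pos hx0 _)
  -- eventual positivity of the integral
  have hev : ∀ᶠ s in atBot, s ≤ S ∧ 0 ≤ rm * (S - s) + C := by
    have h1 : ∀ᶠ s in atBot, s ≤ min S ((rm * S + C) / rm) := eventually_le_atBot _
    filter_upwards [h1] with s hs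
    have hs1 : s ≤ S := hs.trans (min_le_left _ _)
    have hs2 : s ≤ (rm * S + C) / rm := hs.trans (min_le_right _ _)
    have : s * rm ≤ rm * S + C := by
      rw [le_div_iff₀ hrm] at hs2; linarith
    exact ⟨hs1, by nlinarith⟩
  have hpos : ∀ᶠ s in atBot,
      1 ≤ 1 + c * ∫ r in s..t, g r * Real.exp (b * (F r - F s)) := by
    filter_upwards [hev] with s hs
    have hJ : 0 ≤ ∫ r in s..t, g r * Real.exp (b * (F r - F s)) :=
      le_trans (mul_nonneg (Real.exp_pos _).le hs.2) (hkey s hs.1)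
    nlinarith
  rcases hμ.lt_or_eq with hμlt | hμeq
  · -- μ < 0 : use upper bound exp(a*(F t - F s)) * x₀
    have ha' : a < 0 := hodd.pow_neg hμlt
    have hupper : ∀ᶠ s in atBot,
        Real.exp (a * (F t - F s)) * x₀ /
          (1 + c * ∫ r in s..t, g r * Real.exp (b * (F r - F s)))
            ^ ((1 : ℝ) / (2 * (n : ℝ) - 1)) ≤
        Real.exp (a * (F t - F s)) * x₀ := by
      filter_upwards [hpos] with s hs
      have hD : (1 : ℝ) ≤ (1 + c * ∫ r in s..t, g r * Real.exp (b * (F r - F s)))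
          ^ ((1 : ℝ) / (2 * (n : ℝ) - 1)) := Real.one_le_rpow hs hexp.le
      exact div_le_self (mul_nonneg (Real.exp_pos _).le hx0.le) hD
    have hlower : ∀ᶠ s in atBot,
        0 ≤ Real.exp (a * (F t - F s)) * x₀ /
          (1 + c * ∫ r in s..t, g r * Real.exp (b * (F r - F s)))
            ^ ((1 : ℝ) / (2 * (n : ℝ) - 1)) := by
      filter_upwards [hpos] with s hs
      exact div_nonneg (mul_nonneg (Real.exp_pos _).le hx0.le)
        (Real.rpow_nonneg (by linarith) _)
    have hb1 : Tendsto (fun s => a * F s) atBot atTop :=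
      hFdiv.const_mul_atBot_of_neg ha'
    have hb2 : Tendsto (fun s => a * (F t - F s)) atBot atBot := by
      have : Tendsto (fun s => a * F t + -(a * F s)) atBot atBot :=
        tendsto_atBot_add_const_left _ _ (tendsto_neg_atTop_atBot.comp hb1)
      refine this.congr fun s => by ring
    have hb3 : Tendsto (fun s => Real.exp (a * (F t - F s)) * x₀) atBot (nhds 0) := by
      have := (Real.tendsto_exp_atBot.comp hb2).mul_const x₀
      simpa using this
    exact squeeze_zero' hlower hupper hb3
  · -- μ = 0
    have ha0 : a = 0 := by
      simp [ha_def, hμeq, zero_pow (show 2*m-1 ≠ 0 by omega)]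
    have hb0 : b = 0 := by rw [hb_def, ha0, mul_zero]
    have heq : (fun s =>
          Real.exp (μ ^ (2 * m - 1) * (F t - F s)) * x₀ /
            (1 + (2 * (n : ℝ) - 1) * x₀ ^ (2 * n - 1) *
              ∫ r in s..t,
                g r * Real.exp ((2 * (n : ℝ) - 1) * μ ^ (2 * m - 1) * (F r - F s)))
              ^ ((1 : ℝ) / (2 * n - 1))) =
        fun s => x₀ / (1 + c * ∫ r in s..t, g r)
          ^ ((1 : ℝ) / (2 * (n : ℝ) - 1)) := by
      funext s
      rw [show μ ^ (2 * m - 1) = a from rfl, ha0]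
      simp [hc_def]
    rw [heq]
    have hIto : Tendsto (fun s => (∫ r in s..t, g r)) atBot atTop := by
      apply tendsto_atTop_mono' atBot (f₁ := fun s => rm * (S - s) + C)
      · filter_upwards [eventually_le_atBot S] with s hs
        have := hkey s hs
        rw [hb0] at this
        simpa using this
      · have h1 : Tendsto (fun s : ℝ => S - s) atBot atTop :=
          tendsto_atTop_add_const_left _ _ tendsto_neg_atBot_atTop
        have h2 := h1.const_mul_atTop hrm
        exact tendsto_atTop_add_const_right _ C h2
    have hDen : Tendsto (fun s => (1 + c * ∫ r in s..t, g r)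
        ^ ((1 : ℝ) / (2 * (n : ℝ) - 1))) atBot atTop := by
      refine (tendsto_rpow_atTop hexp).comp ?_
      exact tendsto_atTop_add_const_left _ _ (hIto.const_mul_atTop hc)
    exact Tendsto.div_atTop tendsto_const_nhds hDen
end
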